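/- The graph G constructed from p blocks (each block consisting of two copies of a (k−1,τ)-Ramsey graph H joined by a perfect matching, plus a clique Q = K_{τ−1} linking consecutive blocks in a ring by matchings), where V(G) is the set of all matching edges and adjacency is intersecting-matching-pairs, satisfies p·α(H) ≤ α(G) < 3p·α(H). -/

import Mathlib

open Finset

variable {V : Type*}

/-- `s` is an independent set of `G`. -/
def IsIndep (G : SimpleGraph V) (s : Finset V) : Prop :=
  ∀ u ∈ s, ∀ w ∈ s, u ≠ w → ¬ G.Adj u w

/-- The independence number `α(G)`. -/
noncomputable def indepNum [Fintype V] (G : SimpleGraph V) : ℕ :=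
  sSup {n | ∃ s : Finset V, s.card = n ∧ IsIndep G s}

/-- The clique number `ω(G)`. -/
noncomputable def cliqueNum [Fintype V] (G : SimpleGraph V) : ℕ :=
  sSup {n | ∃ s : Finset V, s.card = n ∧ G.IsClique ↑s}

/-- A graph is `k`-claw-free if it contains no induced `K_{1,k}`. -/
def IsClawFree (k : ℕ) (G : SimpleGraph V) : Prop :=
  ¬ ∃ (v : V) (s : Finset V), s.card = k ∧ (∀ u ∈ s, G.Adj v u) ∧
      ∀ u ∈ s, ∀ w ∈ s, u ≠ w → ¬ G.Adj u w

/-- Vertices of the auxiliary graph `G'`: block index `i : ZMod p` together with a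
vertex of the copy `H¹_i` of `H`, a vertex of the copy `H²_i` of `H`, or a vertex of
the clique `Q_i = K_{τ-1}`. -/
abbrev RingVert (V : Type*) (p τ : ℕ) := ZMod p × (V ⊕ V ⊕ Fin (τ - 1))

/-- Matching edges of `G'`: in block `i`, either the matching edge joining `v ∈ H¹_i`
to its copy in `H²_i`, or the matching edge joining the `j`-th matched vertex of
`H²_i` to the `j`-th vertex of `Q_i`, or the matching edge joining the `j`-th vertex
of `Q_i` to the `j`-th matched vertex of `H¹_{i+1}`. -/
abbrev RingEdge (V : Type*) (p τ : ℕ) := ZMod p × (V ⊕ Fin (τ - 1) ⊕ Fin (τ - 1))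

/-- The non-matching edges of `G'`: edges inside each copy `H¹_i` and `H²_i` of `H`,
and all edges inside each clique `Q_i`. -/
def ringBase (H : SimpleGraph V) (p τ : ℕ) : SimpleGraph (RingVert V p τ) :=
  SimpleGraph.fromRel (fun x y =>
    x.1 = y.1 ∧
      (match x.2, y.2 with
        | Sum.inl a, Sum.inl b => H.Adj a b
        | Sum.inr (Sum.inl a), Sum.inr (Sum.inl b) => H.Adj a b
        | Sum.inr (Sum.inr _), Sum.inr (Sum.inr _) => True
        | _, _ => False))

/-- The two endpoints in `G'` of a matching edge, where `f i : Fin (τ-1) ↪ V`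
selects the `τ-1` vertices of `H²_i` matched to `Q_i`, and `g i : Fin (τ-1) ↪ V`
selects the `τ-1` vertices of `H¹_i` matched to `Q_{i-1}`. -/
def ringEnds (p τ : ℕ) (f g : ZMod p → Fin (τ - 1) ↪ V) :
    RingEdge V p τ → Set (RingVert V p τ)
  | (i, Sum.inl v) => {(i, Sum.inl v), (i, Sum.inr (Sum.inl v))}
  | (i, Sum.inr (Sum.inl j)) => {(i, Sum.inr (Sum.inl (f i j))), (i, Sum.inr (Sum.inr j))}
  | (i, Sum.inr (Sum.inr j)) => {(i, Sum.inr (Sum.inr j)), (i + 1, Sum.inl (g (i + 1) j))}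

/-- The graph `G` of the ring-of-blocks construction: one vertex per matching edge of
`G'`, two vertices adjacent iff the corresponding matching edges do not form an
induced matching in `G'` (they share an endpoint or some edge of `G'` joins their
endpoint sets). -/
def ringGraph (H : SimpleGraph V) (p τ : ℕ) (f g : ZMod p → Fin (τ - 1) ↪ V) :
    SimpleGraph (RingEdge V p τ) :=
  SimpleGraph.fromRel (fun e e' =>
    ∃ x ∈ ringEnds p τ f g e, ∃ y ∈ ringEnds p τ f g e',
      x = y ∨ (ringBase H p τ).Adj x y)

/-! Take a maximum independent set `S` of `H`: in every block the `H¹–H²` matching edges at the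
vertices of `S` form an induced matching, so `α(G) ≥ p·α(H)`. Conversely, the edges of an induced
matching lying in one block are either `H¹–H²` matching edges, whose vertices form an independent
set of `H`, or edges touching the clique `Q_i`, of which there is at most one. Hence
`α(G) ≤ p·(α(H) + 1)`, which is `< 3p·α(H)` because `α(H) ≥ 1`. -/

theorem indepNum_eq_simpleGraph_indepNum {W : Type*} [Fintype W] (G : SimpleGraph W) :
    indepNum G = G.indepNum := by
  simp only [indepNum, SimpleGraph.indepNum, SimpleGraph.isNIndepSet_iff, IsIndep,
    SimpleGraph.IsIndepSet, Set.Pairwise, mem_coe, and_comm]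

namespace SimpleGraph

variable {W : Type*} {G : SimpleGraph W}

theorem indepNum_le_of_forall_card_le [Finite W] {n : ℕ}
    (h : ∀ s : Finset W, G.IsIndepSet (s : Set W) → #s ≤ n) : G.indepNum ≤ n := by
  obtain ⟨s, hs⟩ := G.exists_isNIndepSet_indepNum
  exact hs.card_eq ▸ h s hs.isIndepSet

theorem one_le_indepNum [Finite W] [Nonempty W] : 1 ≤ G.indepNum := by
  obtain ⟨v⟩ := ‹Nonempty W›
  simpa using (show G.IsIndepSet ({v} : Finset W) by simp [IsIndepSet]).card_le_indepNum

end SimpleGraph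

theorem card_filter_fst_eq_le {ι α β : Type*} [DecidableEq ι] [DecidableEq α] [DecidableEq β]
    [Fintype α] [Fintype β] (s : Finset (ι × (α ⊕ β))) (i : ι) :
    #{e ∈ s | e.1 = i} ≤ #{a | (i, Sum.inl a) ∈ s} + #{b | (i, Sum.inr b) ∈ s} := by
  rw [← card_disjSum]
  refine card_le_card_of_injOn Prod.snd ?_ ?_
  · rintro ⟨j, a | b⟩ h <;> obtain ⟨h, rfl⟩ := mem_filter.1 h <;> simpa using h
  · rintro ⟨j, x⟩ hx ⟨j', y⟩ hy (rfl : x = y)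
    simp_all

section Ring

variable {H : SimpleGraph V} {p τ : ℕ} {f g : ZMod p → Fin (τ - 1) ↪ V}

theorem ringGraph_adj_inl_iff {i i' : ZMod p} {v w : V} :
    (ringGraph H p τ f g).Adj (i, .inl v) (i', .inl w) ↔ i = i' ∧ H.Adj v w := by
  simp only [ringGraph, ringBase, ringEnds, SimpleGraph.fromRel_adj, Set.mem_insert_iff,
    Set.mem_singleton_iff, exists_eq_or_imp, exists_eq_left]
  grind [SimpleGraph.Adj.symm, SimpleGraph.Adj.ne]

theorem mem_ringEnds_inr (i : ZMod p) (x : Fin (τ - 1) ⊕ Fin (τ - 1)) :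
    (i, .inr (.inr (x.elim id id))) ∈ ringEnds p τ f g (i, .inr x) := by
  cases x <;> simp [ringEnds]

-- Both edges have an endpoint in the clique `Q_i`.
theorem ringGraph_adj_inr (i : ZMod p) {x y : Fin (τ - 1) ⊕ Fin (τ - 1)} (h : x ≠ y) :
    (ringGraph H p τ f g).Adj (i, .inr x) (i, .inr y) := by
  rw [ringGraph, SimpleGraph.fromRel_adj]
  refine ⟨by simpa using h, .inl ⟨_, mem_ringEnds_inr i x, _, mem_ringEnds_inr i y, ?_⟩⟩
  by_cases hxy : x.elim id id = y.elim id id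
  · exact .inl (by rw [hxy])
  · exact .inr (by simp [ringBase, hxy])

variable [Fintype V]

theorem SimpleGraph.IsIndepSet.card_ringGraph_block_le {s : Finset (RingEdge V p τ)}
    (hs : (ringGraph H p τ f g).IsIndepSet (s : Set (RingEdge V p τ))) (i : ZMod p) :
    #{e ∈ s | e.1 = i} ≤ H.indepNum + 1 := by
  classical
  refine (card_filter_fst_eq_le s i).trans (add_le_add ?_ ?_)
  · refine SimpleGraph.IsIndepSet.card_le_indepNum fun v hv w hw hne hadj => ?_
    simp only [coe_filter, mem_univ, true_and, Set.mem_ofPred_eq] at hv hw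
    exact hs hv hw (by simpa using hne) (ringGraph_adj_inl_iff.2 ⟨rfl, hadj⟩)
  · refine card_le_one.2 fun x hx y hy => by_contra fun hne => ?_
    simp only [mem_filter, mem_univ, true_and] at hx hy
    exact hs hx hy (by simpa using hne) (ringGraph_adj_inr i hne)

variable [NeZero p]

theorem indepNum_ringGraph_le : (ringGraph H p τ f g).indepNum ≤ p * (H.indepNum + 1) :=
  SimpleGraph.indepNum_le_of_forall_card_le fun s hs => by
    simpa [mul_comm] using card_le_mul_card_image_of_maps_to (f := Prod.fst) (t := univ)
      (fun _ _ => mem_univ _) _ (fun i _ => hs.card_ringGraph_block_le i)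

theorem mul_indepNum_le_indepNum_ringGraph :
    p * H.indepNum ≤ (ringGraph H p τ f g).indepNum := by
  obtain ⟨S, hS⟩ := H.exists_isNIndepSet_indepNum
  have hT : (ringGraph H p τ f g).IsIndepSet
      ((univ ×ˢ S.map .inl : Finset (RingEdge V p τ)) : Set (RingEdge V p τ)) := by
    rintro ⟨i, x⟩ hx ⟨i', y⟩ hy hne hadj
    simp only [coe_product, coe_univ, Set.univ_prod, Set.mem_preimage, coe_map,
      Function.Embedding.inl_apply, Set.mem_image, mem_coe] at hx hy
    obtain ⟨v, hv, rfl⟩ := hx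
    obtain ⟨w, hw, rfl⟩ := hy
    obtain ⟨-, hvw⟩ := ringGraph_adj_inl_iff.1 hadj
    exact hS.isIndepSet hv hw hvw.ne hvw
  simpa [hS.card_eq] using hT.card_le_indepNum

end Ring

theorem ring_indepNum_general [Fintype V] (H : SimpleGraph V)
    (p τ : ℕ) [NeZero p] (hτ : 3 ≤ τ)
    (f g : ZMod p → Fin (τ - 1) ↪ V) :
    p * indepNum H ≤ indepNum (ringGraph H p τ f g) ∧
    indepNum (ringGraph H p τ f g) < 3 * p * indepNum H := by
  have : Nonempty V := ⟨f 0 ⟨0, by omega⟩⟩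
  have hH : 1 ≤ H.indepNum := SimpleGraph.one_le_indepNum
  have hp : 0 < p := NeZero.pos p
  simp only [indepNum_eq_simpleGraph_indepNum]
  refine ⟨mul_indepNum_le_indepNum_ringGraph, indepNum_ringGraph_le.trans_lt ?_⟩
  nlinarith

/-- The ring-of-blocks graph `G` built from `p` blocks of a `(k−1,τ)`-Ramsey graph
`H` (so `α(H) ≤ k−2` and `ω(H) ≤ τ−1`) satisfies `p·α(H) ≤ α(G) < 3p·α(H)`. -/
theorem ring_indepNum [Fintype V] [DecidableEq V] (H : SimpleGraph V)
    (k p τ : ℕ) [NeZero p] (hk : 4 ≤ k) (hτ : 3 ≤ τ)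
    (hα : indepNum H ≤ k - 2) (hω : cliqueNum H ≤ τ - 1)
    (f g : ZMod p → Fin (τ - 1) ↪ V) :
    p * indepNum H ≤ indepNum (ringGraph H p τ f g) ∧
    indepNum (ringGraph H p τ f g) < 3 * p * indepNum H :=
  ring_indepNum_general H p τ hτ f g
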